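/- Let (v_1, ..., v_k) be a p-basis of a Z_{p^r}-submodule M of Z_{p^r}^n. If v_i' = v_i + Σ_{j=i+1}^{k} a_j v_j with a_j ∈ Z_{p^r}, then (v_1, ..., v_{i-1}, v_i', v_{i+1}, ..., v_k) is also a p-basis of M. -/

import Mathlib

/-- `(v_1, ..., v_k)` is a `p`-basis of the `Z_{p^r}`-submodule `M` of `Z_{p^r}^n`. -/
def IsPBasis (p r n k : ℕ) (v : Fin k → (Fin n → ZMod (p ^ r)))
    (M : Submodule (ZMod (p ^ r)) (Fin n → ZMod (p ^ r))) : Prop :=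
  (∀ i, v i ∈ M) ∧
  (∀ x ∈ M, ∃ a : Fin k → ℕ, (∀ i, a i < p) ∧ x = ∑ i, (a i : ZMod (p ^ r)) • v i) ∧
  (∀ i : Fin k, ∃ a : Fin k → ℕ, (∀ j, a j < p) ∧ (∀ j : Fin k, (j : ℕ) ≤ (i : ℕ) → a j = 0) ∧
    (p : ZMod (p ^ r)) • v i = ∑ j, (a j : ZMod (p ^ r)) • v j) ∧
  (∀ a : Fin k → ℕ, (∀ i, a i < p) → ∑ i, (a i : ZMod (p ^ r)) • v i = 0 → ∀ i, a i = 0)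

/-!
Write `T_m` (`tailSpan R v m`) for the span of the `v_j` with `j ≥ m`. The replacement
`v_i ↦ v_i'` is invertible by the same kind of replacement (with `-a`), and it does not change
any `T_m`. The conditions on a `p`-basis all follow from the spans `T_m` once one knows that,
for a sequence with `p • v_j ∈ T_{j+1}`, every element of `T_m` is an `A_p`-combination of the
`v_j` with `j ≥ m`: reduce the coefficient `c` of `v_m` to its residue mod `p` and push
`p ⌊c/p⌋ v_m` into `T_{m+1}`. For independence, `Σ b_j v_j' = 0` puts `Σ b_j v_j` into
`T_{i+1}`; expanding it there in digits and using the independence of the `v_j` forces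
`b_j = 0` for `j ≤ i`, and then `Σ b_j v_j' = Σ b_j v_j`.
-/

open Finset Submodule

variable {k : ℕ}

section TailSpan

variable (R : Type*) {V : Type*} [Semiring R] [AddCommMonoid V] [Module R V]

def tailSpan (v : Fin k → V) (m : ℕ) : Submodule R V :=
  span R (v '' {j | m ≤ (j : ℕ)})

variable {R} {v : Fin k → V}

theorem tailSpan_antitone : Antitone (tailSpan R v) :=
  fun _ _ hm => span_mono <| Set.image_mono fun _ hj => le_trans hm hj

theorem mem_tailSpan_of_le {m : ℕ} {j : Fin k} (hj : m ≤ j) : v j ∈ tailSpan R v m :=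
  subset_span ⟨j, hj, rfl⟩

theorem sum_smul_mem_tailSpan {m : ℕ} {c : Fin k → R}
    (hc : ∀ j : Fin k, (j : ℕ) < m → c j = 0) :
    ∑ j, c j • v j ∈ tailSpan R v m := by
  refine sum_mem fun j _ => ?_
  rcases lt_or_ge (j : ℕ) m with hj | hj
  · simp [hc j hj]
  · exact smul_mem _ _ (mem_tailSpan_of_le hj)

theorem sum_filter_lt_smul_mem_tailSpan (i : Fin k) (a : Fin k → R) :
    ∑ j ∈ univ.filter (fun j : Fin k => i < j), a j • v j ∈ tailSpan R v (i + 1) :=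
  sum_mem fun _ hj => smul_mem _ _ (mem_tailSpan_of_le (mem_filter.1 hj).2)

theorem tailSpan_eq_bot {m : ℕ} (hm : k ≤ m) : tailSpan R v m = ⊥ := by
  rw [tailSpan, span_eq_bot]
  rintro _ ⟨j, hj, rfl⟩
  exact absurd (lt_of_lt_of_le j.isLt hm) (not_lt.2 hj)

theorem tailSpan_eq_span_singleton_sup (j : Fin k) :
    tailSpan R v j = R ∙ v j ⊔ tailSpan R v (j + 1) := by
  have : {l : Fin k | (j : ℕ) ≤ l} = ({j} : Set (Fin k)) ∪ {l | (j : ℕ) + 1 ≤ l} := by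
    ext l
    simp only [Set.mem_ofPred_eq, Set.mem_union, Set.mem_singleton_iff, Fin.ext_iff]
    omega
  rw [tailSpan, this, Set.image_union, span_union, Set.image_singleton, tailSpan]

variable (R) in
def IsWeakPGenerator (p : ℕ) (v : Fin k → V) : Prop :=
  ∀ j : Fin k, (p : R) • v j ∈ tailSpan R v (j + 1)

end TailSpan

section AddLaterRows

variable {R V : Type*} [Ring R] [AddCommGroup V] [Module R V]

def addLaterRows (v : Fin k → V) (i : Fin k) (a : Fin k → R) : Fin k → V :=
  Function.update v i (v i + ∑ j ∈ univ.filter (fun j : Fin k => i < j), a j • v j)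

variable {v : Fin k → V} {i : Fin k} {a : Fin k → R}

theorem addLaterRows_self :
    addLaterRows v i a i = v i + ∑ j ∈ univ.filter (fun j : Fin k => i < j), a j • v j :=
  Function.update_self _ _ _

theorem addLaterRows_of_ne {j : Fin k} (hj : j ≠ i) : addLaterRows v i a j = v j :=
  Function.update_of_ne hj _ _

theorem addLaterRows_eq_add_single : addLaterRows v i a =
    v + Pi.single i (∑ j ∈ univ.filter (fun j : Fin k => i < j), a j • v j) := by
  ext j : 1
  rcases eq_or_ne j i with rfl | hj
  · simp [addLaterRows_self]
  · simp [addLaterRows_of_ne hj, hj]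

theorem sum_smul_addLaterRows (c : Fin k → R) :
    ∑ j, c j • addLaterRows v i a j =
      ∑ j, c j • v j + c i • ∑ j ∈ univ.filter (fun j : Fin k => i < j), a j • v j := by
  simp [addLaterRows_eq_add_single, smul_add, sum_add_distrib, Pi.single_apply]

theorem addLaterRows_neg_addLaterRows : addLaterRows (addLaterRows v i a) i (-a) = v := by
  ext j : 1
  rcases eq_or_ne j i with rfl | hj
  · have hlater : ∑ l ∈ univ.filter (fun l : Fin k => j < l), (-a) l • addLaterRows v j a l =
        -∑ l ∈ univ.filter (fun l : Fin k => j < l), a l • v l := by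
      rw [← sum_neg_distrib]
      refine sum_congr rfl fun l hl => ?_
      rw [addLaterRows_of_ne (mem_filter.1 hl).2.ne', Pi.neg_apply, neg_smul]
    rw [addLaterRows_self, hlater, addLaterRows_self, add_neg_cancel_right]
  · rw [addLaterRows_of_ne hj, addLaterRows_of_ne hj]

theorem tailSpan_addLaterRows_le (m : ℕ) :
    tailSpan R (addLaterRows v i a) m ≤ tailSpan R v m := by
  refine span_le.2 ?_
  rintro _ ⟨j, hj, rfl⟩
  rcases eq_or_ne j i with rfl | hji
  · rw [addLaterRows_self]
    exact add_mem (mem_tailSpan_of_le hj)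
      (tailSpan_antitone (Nat.le_succ_of_le hj) (sum_filter_lt_smul_mem_tailSpan j a))
  · rw [addLaterRows_of_ne hji]
    exact mem_tailSpan_of_le hj

theorem tailSpan_addLaterRows (m : ℕ) : tailSpan R (addLaterRows v i a) m = tailSpan R v m := by
  refine le_antisymm (tailSpan_addLaterRows_le m) ?_
  conv_lhs => rw [← addLaterRows_neg_addLaterRows (v := v) (i := i) (a := a)]
  exact tailSpan_addLaterRows_le m

theorem IsWeakPGenerator.addLaterRows {p : ℕ} (hv : IsWeakPGenerator R p v) (i : Fin k)
    (a : Fin k → R) : IsWeakPGenerator R p (addLaterRows v i a) := by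
  intro j
  rw [tailSpan_addLaterRows]
  rcases eq_or_ne j i with rfl | hj
  · rw [addLaterRows_self, smul_add]
    exact add_mem (hv j) (smul_mem _ _ (sum_filter_lt_smul_mem_tailSpan j a))
  · rw [addLaterRows_of_ne hj]
    exact hv j

end AddLaterRows

section Digits

variable {R V : Type*} [Semiring R] [AddCommMonoid V] [Module R V]

variable (R) in
def IsDigitSum (p : ℕ) (v : Fin k → V) (m : ℕ) (x : V) : Prop :=
  ∃ b : Fin k → ℕ, (∀ j, b j < p) ∧ (∀ j : Fin k, (j : ℕ) < m → b j = 0) ∧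
    x = ∑ j, (b j : R) • v j

variable (R) in
def IsPIndependent (p : ℕ) (v : Fin k → V) : Prop :=
  ∀ b : Fin k → ℕ, (∀ j, b j < p) → ∑ j, (b j : R) • v j = 0 → ∀ j, b j = 0

variable {p m : ℕ} {v : Fin k → V}

theorem isDigitSum_zero (hp : 0 < p) : IsDigitSum R p v m 0 :=
  ⟨0, fun _ => hp, fun _ _ => rfl, by simp⟩

theorem IsDigitSum.smul_add {j : Fin k} {d : ℕ} (hd : d < p) {x : V}
    (hx : IsDigitSum R p v (j + 1) x) : IsDigitSum R p v j ((d : R) • v j + x) := by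
  obtain ⟨b, hbp, hb0, rfl⟩ := hx
  refine ⟨b + Pi.single j d, fun l => ?_, fun l hl => ?_, ?_⟩
  · rcases eq_or_ne l j with rfl | hl
    · simpa [hb0 l (Nat.lt_succ_self _)] using hd
    · simpa [hl] using hbp l
  · have hlj : l ≠ j := fun h => (h ▸ hl).false
    simp [hlj, hb0 l (by omega)]
  · simp [add_smul, sum_add_distrib, Pi.single_apply, add_comm]

end Digits

section PBasis

variable {N : ℕ} [NeZero N] {V : Type*} [AddCommGroup V] [Module (ZMod N) V] {p : ℕ}
  {v : Fin k → V}

theorem ZMod.natCast_mod_add_div_mul (c : ZMod N) (p : ℕ) :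
    c = ((c.val % p : ℕ) : ZMod N) + ((c.val / p : ℕ) : ZMod N) * p := by
  conv_lhs => rw [← ZMod.natCast_zmod_val c, ← Nat.mod_add_div c.val p]
  push_cast
  ring

theorem isDigitSum_of_mem_tailSpan (hp : 0 < p) (hv : IsWeakPGenerator (ZMod N) p v) {m : ℕ}
    {x : V} (hx : x ∈ tailSpan (ZMod N) v m) : IsDigitSum (ZMod N) p v m x := by
  rcases le_or_gt m k with hmk | hkm
  · induction hmk using Nat.decreasingInduction generalizing x with
    | self =>
      rw [tailSpan_eq_bot le_rfl, mem_bot] at hx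
      exact hx ▸ isDigitSum_zero hp
    | of_succ m hm ih =>
      set j : Fin k := ⟨m, hm⟩
      rw [show m = (j : ℕ) from rfl, tailSpan_eq_span_singleton_sup, Submodule.mem_sup] at hx
      obtain ⟨_, hc, y, hy, rfl⟩ := hx
      obtain ⟨c, rfl⟩ := mem_span_singleton.1 hc
      have hsplit : c • v j + y = ((c.val % p : ℕ) : ZMod N) • v j +
          (((c.val / p : ℕ) : ZMod N) • ((p : ZMod N) • v j) + y) := by
        conv_lhs => rw [ZMod.natCast_mod_add_div_mul c p]
        rw [add_smul, mul_smul, add_assoc]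
      rw [hsplit]
      exact IsDigitSum.smul_add (j := j) (Nat.mod_lt _ hp) (ih (add_mem (smul_mem _ _ (hv j)) hy))
  · rw [tailSpan_eq_bot hkm.le, mem_bot] at hx
    exact hx ▸ isDigitSum_zero hp

theorem IsPIndependent.eq_zero_of_sum_mem_tailSpan (hind : IsPIndependent (ZMod N) p v)
    (hp : 0 < p) (hv : IsWeakPGenerator (ZMod N) p v) {m : ℕ} {b : Fin k → ℕ}
    (hb : ∀ j, b j < p) (hsum : ∑ j, (b j : ZMod N) • v j ∈ tailSpan (ZMod N) v m)
    {j : Fin k} (hj : (j : ℕ) < m) : b j = 0 := by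
  set b₀ : Fin k → ℕ := fun l => if (l : ℕ) < m then b l else 0
  have htail : -∑ l, (b₀ l : ZMod N) • v l ∈ tailSpan (ZMod N) v m := by
    have : -∑ l, (b₀ l : ZMod N) • v l =
        ∑ l, ((b l : ZMod N) - b₀ l) • v l - ∑ l, (b l : ZMod N) • v l := by
      simp [sub_smul, sum_sub_distrib]
    rw [this]
    exact sub_mem (sum_smul_mem_tailSpan fun l hl => by simp [b₀, hl]) hsum
  obtain ⟨b', hb', hb'0, hb'sum⟩ := isDigitSum_of_mem_tailSpan hp hv htail
  have hzero := hind (b₀ + b') (fun l => ?_) (by simp [add_smul, sum_add_distrib, ← hb'sum])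
  · simpa [b₀, hj] using (Nat.add_eq_zero_iff.1 (hzero j)).1
  · by_cases hl : (l : ℕ) < m
    · simp [b₀, hl, hb'0 l hl, hb l]
    · simp [b₀, hl, hb' l]

theorem IsPIndependent.addLaterRows (hind : IsPIndependent (ZMod N) p v) (hp : 0 < p)
    (hv : IsWeakPGenerator (ZMod N) p v) (i : Fin k) (a : Fin k → ZMod N) :
    IsPIndependent (ZMod N) p (addLaterRows v i a) := by
  intro b hb hsum
  rw [sum_smul_addLaterRows] at hsum
  have hbi : b i = 0 := hind.eq_zero_of_sum_mem_tailSpan hp hv hb (m := i + 1) (by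
      rw [eq_neg_of_add_eq_zero_left hsum]
      exact neg_mem (smul_mem _ _ (sum_filter_lt_smul_mem_tailSpan i a))) (Nat.lt_succ_self _)
  rw [hbi, Nat.cast_zero, zero_smul, add_zero] at hsum
  exact hind b hb hsum

end PBasis

theorem pbasis_add_later_rows_general (p r n k : ℕ) (hp : p.Prime)
    (M : Submodule (ZMod (p ^ r)) (Fin n → ZMod (p ^ r)))
    (v : Fin k → (Fin n → ZMod (p ^ r))) (hv : IsPBasis p r n k v M)
    (i : Fin k) (a : Fin k → ZMod (p ^ r)) :
    IsPBasis p r n k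
      (Function.update v i (v i + ∑ j ∈ Finset.univ.filter (fun j : Fin k => i < j), a j • v j))
      M := by
  show IsPBasis p r n k (addLaterRows v i a) M
  have : NeZero (p ^ r) := ⟨pow_ne_zero r hp.ne_zero⟩
  obtain ⟨hmem, hspan, hgen, hind⟩ := hv
  have hweak : IsWeakPGenerator (ZMod (p ^ r)) p v := fun j => by
    obtain ⟨b, -, hb0, hb⟩ := hgen j
    exact hb ▸ sum_smul_mem_tailSpan fun l hl => by
      rw [hb0 l (Nat.lt_succ_iff.1 hl), Nat.cast_zero]
  have hweak' := hweak.addLaterRows i a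
  have hM : tailSpan (ZMod (p ^ r)) v 0 ≤ M := span_le.2 <| by
    rintro _ ⟨j, -, rfl⟩
    exact hmem j
  refine ⟨fun j => hM ?_, fun x hx => ?_, fun j => ?_,
    IsPIndependent.addLaterRows hind hp.pos hweak i a⟩
  · rw [← tailSpan_addLaterRows (i := i) (a := a)]
    exact mem_tailSpan_of_le (Nat.zero_le _)
  · obtain ⟨b, -, rfl⟩ := hspan x hx
    have hx' :
        ∑ j, (b j : ZMod (p ^ r)) • v j ∈ tailSpan (ZMod (p ^ r)) (addLaterRows v i a) 0 := by
      rw [tailSpan_addLaterRows]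
      exact sum_smul_mem_tailSpan fun _ h => absurd h (Nat.not_lt_zero _)
    obtain ⟨c, hc, -, hx⟩ := isDigitSum_of_mem_tailSpan hp.pos hweak' hx'
    exact ⟨c, hc, hx⟩
  · obtain ⟨c, hc, hc0, hx⟩ := isDigitSum_of_mem_tailSpan hp.pos hweak' (hweak' j)
    exact ⟨c, hc, fun l hl => hc0 l (Nat.lt_succ_of_le hl), hx⟩

/-- Lemma 2.1(1): replacing `v_i` by `v_i' = v_i + Σ_{j>i} a_j v_j` (with `a_j ∈ Z_{p^r}`)
in a `p`-basis of `M` again yields a `p`-basis of `M`. -/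
theorem pbasis_add_later_rows (p r n k : ℕ) (hp : p.Prime) (hr : 0 < r)
    (M : Submodule (ZMod (p ^ r)) (Fin n → ZMod (p ^ r)))
    (v : Fin k → (Fin n → ZMod (p ^ r))) (hv : IsPBasis p r n k v M)
    (i : Fin k) (a : Fin k → ZMod (p ^ r)) :
    IsPBasis p r n k
      (Function.update v i (v i + ∑ j ∈ Finset.univ.filter (fun j : Fin k => i < j), a j • v j))
      M :=
  pbasis_add_later_rows_general p r n k hp M v hv i a
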